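/- arXiv:1010.5937 — 2 statements merged into one kernel-verified Lean document; each statement's English description precedes it below -/
import Mathlib

section
/- Let T be a switch tree with a source r, and let S be a one-sided convex point set with |S| = |T|. Then T admits an upward planar straight-line embedding into S such that r is mapped to the lowest point of S. -/
open Finset

noncomputable section

/-- 2D cross product / determinant. -/
def det2 (u v : ℝ × ℝ) : ℝ := u.1 * v.2 - u.2 * v.1

/-- General position: pairwise distinct y-coordinates, no three collinear. -/
def GenPos (S : Finset (ℝ × ℝ)) : Prop :=
  (∀ p ∈ S, ∀ q ∈ S, p ≠ q → p.2 ≠ q.2) ∧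
  (∀ p ∈ S, ∀ q ∈ S, ∀ r ∈ S, p ≠ q → p ≠ r → q ≠ r →
    ¬ Collinear ℝ ({p, q, r} : Set (ℝ × ℝ)))

/-- Convex position: general position and no point in the convex hull of the others. -/
def ConvexPos (S : Finset (ℝ × ℝ)) : Prop :=
  GenPos S ∧ ∀ p ∈ S, p ∉ convexHull ℝ (↑(S.erase p) : Set (ℝ × ℝ))

def IsLowest (S : Finset (ℝ × ℝ)) (b : ℝ × ℝ) : Prop := b ∈ S ∧ ∀ p ∈ S, b.2 ≤ p.2

def IsHighest (S : Finset (ℝ × ℝ)) (t : ℝ × ℝ) : Prop := t ∈ S ∧ ∀ p ∈ S, p.2 ≤ t.2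

/-- One-sided convex point set: all points other than the lowest point `b` and the
highest point `t` lie strictly on one side of the line through `b` and `t`. -/
def OneSided (S : Finset (ℝ × ℝ)) : Prop :=
  ConvexPos S ∧ ∃ b t, IsLowest S b ∧ IsHighest S t ∧
    ((∀ p ∈ S, p ≠ b → p ≠ t → 0 < det2 (t - b) (p - b)) ∨
     (∀ p ∈ S, p ≠ b → p ≠ t → det2 (t - b) (p - b) < 0))

/-- Upward planar straight-line embedding of a digraph (given by its arc relation `Adj`)
into the point set `S` via the vertex placement `f`: vertices go injectively to points of
`S`, every arc goes strictly upward, and two (distinct) arcs may only meet at common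
endpoints. -/
def UPSE {V : Type*} (Adj : V → V → Prop) (S : Finset (ℝ × ℝ)) (f : V → ℝ × ℝ) : Prop :=
  Function.Injective f ∧ (∀ v, f v ∈ S) ∧
  (∀ u v, Adj u v → (f u).2 < (f v).2) ∧
  (∀ a b c d, Adj a b → Adj c d → (a, b) ≠ (c, d) →
    ∀ p, p ∈ segment ℝ (f a) (f b) → p ∈ segment ℝ (f c) (f d) →
      p ∈ ({f a, f b} : Set (ℝ × ℝ)) ∧ p ∈ ({f c, f d} : Set (ℝ × ℝ)))

/-- A directed tree: an orientation (no 2-cycles, no loops) whose underlying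
undirected graph is a tree. -/
def IsDirTree {V : Type*} (Adj : V → V → Prop) : Prop :=
  (∀ u v, Adj u v → ¬ Adj v u) ∧ (∀ v, ¬ Adj v v) ∧
  (SimpleGraph.fromRel Adj).IsTree

/-- Switch digraph: every vertex is a source or a sink. -/
def IsSwitch {V : Type*} (Adj : V → V → Prop) : Prop :=
  ∀ v, (∀ u, ¬ Adj u v) ∨ (∀ u, ¬ Adj v u)

/-!
Place the vertices along a line so that `r` comes first, every arc points forward and no two arcs
interleave as intervals. Every directed tree has such an order starting at a source: remove a leaf
other than `r`, order the rest, and put the leaf back right next to its neighbour, so that its arc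
joins consecutive positions. Sorted by height, the points of a one-sided convex set form a convex
chain, and in a convex chain the segments joining non-interleaving pairs of points meet at most in
common endpoints. Sending the `i`-th vertex to the `i`-th lowest point is therefore an upward planar
embedding.
-/

section StackLayout

variable {V α β : Type*}

def Interleave [LT α] (a b c d : α) : Prop := a < c ∧ c < b ∧ b < d

/-- An upward one-page book embedding: the arcs, drawn as arcs above the line through the placed
vertices, do not cross. -/
structure IsUpwardStackLayout [LT α] (Adj : V → V → Prop) (g : V → α) : Prop where
  injective : Function.Injective g
  lt_of_adj : ∀ ⦃u v⦄, Adj u v → g u < g v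
  not_interleave : ∀ ⦃a b c d⦄, Adj a b → Adj c d → ¬ Interleave (g a) (g b) (g c) (g d)

theorem StrictMono.isUpwardStackLayout_comp_iff [LinearOrder α] [LinearOrder β] {φ : α → β}
    (hφ : StrictMono φ) {Adj : V → V → Prop} {g : V → α} :
    IsUpwardStackLayout Adj (φ ∘ g) ↔ IsUpwardStackLayout Adj g := by
  have key : ∀ a b c d, Interleave (φ a) (φ b) (φ c) (φ d) ↔ Interleave a b c d := by
    simp only [Interleave, hφ.lt_iff_lt, implies_true]
  refine ⟨fun h => ⟨h.injective.of_comp, fun u v huv => ?_,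
      fun a b c d hab hcd => ?_⟩, fun h => ⟨hφ.injective.comp h.injective, fun u v huv => ?_,
      fun a b c d hab hcd => ?_⟩⟩
  · exact hφ.lt_iff_lt.1 (h.lt_of_adj huv)
  · exact (key _ _ _ _).not.1 (h.not_interleave hab hcd)
  · exact hφ (h.lt_of_adj huv)
  · exact (key _ _ _ _).not.2 (h.not_interleave hab hcd)

def shiftFrom (k x : ℕ) : ℕ := if x < k then x else x + 1

theorem strictMono_shiftFrom (k : ℕ) : StrictMono (shiftFrom k) := by
  intro x y h
  unfold shiftFrom
  split_ifs <;> omega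

theorem shiftFrom_ne (k x : ℕ) : shiftFrom k x ≠ k := by
  unfold shiftFrom
  split_ifs <;> omega

def insertAt [DecidableEq V] (ℓ : V) (k : ℕ) (g₀ : {w // w ≠ ℓ} → ℕ) (w : V) : ℕ :=
  if h : w = ℓ then k else shiftFrom k (g₀ ⟨w, h⟩)

theorem insertAt_self [DecidableEq V] (ℓ : V) (k : ℕ) (g₀ : {w // w ≠ ℓ} → ℕ) :
    insertAt ℓ k g₀ ℓ = k := dif_pos rfl

theorem insertAt_of_ne [DecidableEq V] {ℓ w : V} (h : w ≠ ℓ) (k : ℕ) (g₀ : {w // w ≠ ℓ} → ℕ) :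
    insertAt ℓ k g₀ w = shiftFrom k (g₀ ⟨w, h⟩) := dif_neg h

theorem not_interleave_succ_left (a c d : ℕ) : ¬ Interleave a (a + 1) c d := by
  unfold Interleave; omega

theorem not_interleave_succ_right (a b c : ℕ) : ¬ Interleave a b c (c + 1) := by
  unfold Interleave; omega

theorem IsUpwardStackLayout.of_restrict {Adj : V → V → Prop} {ℓ : V} {g : V → ℕ}
    (hinj : Function.Injective g) (hstep : ∀ ⦃a b⦄, Adj a b → a = ℓ ∨ b = ℓ → g b = g a + 1)
    (hrest : IsUpwardStackLayout (fun x y : {w // w ≠ ℓ} => Adj x y) (fun x => g x)) :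
    IsUpwardStackLayout Adj g := by
  refine ⟨hinj, fun u v huv => ?_, fun a b c d hab hcd => ?_⟩
  · by_cases h : u = ℓ ∨ v = ℓ
    · rw [hstep huv h]; omega
    · push Not at h
      exact hrest.lt_of_adj (u := ⟨u, h.1⟩) (v := ⟨v, h.2⟩) huv
  · by_cases h₁ : a = ℓ ∨ b = ℓ
    · rw [hstep hab h₁]; exact not_interleave_succ_left _ _ _
    by_cases h₂ : c = ℓ ∨ d = ℓ
    · rw [hstep hcd h₂]; exact not_interleave_succ_right _ _ _
    push Not at h₁ h₂
    exact hrest.not_interleave (a := ⟨a, h₁.1⟩) (b := ⟨b, h₁.2⟩) (c := ⟨c, h₂.1⟩)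
      (d := ⟨d, h₂.2⟩) hab hcd

theorem insertAt_injective [DecidableEq V] {ℓ : V} {k : ℕ} {g₀ : {w // w ≠ ℓ} → ℕ}
    (hg₀ : Function.Injective g₀) : Function.Injective (insertAt ℓ k g₀) := by
  intro x y hxy
  by_cases hx : x = ℓ <;> by_cases hy : y = ℓ
  · rw [hx, hy]
  · rw [hx, insertAt_self, insertAt_of_ne hy] at hxy
    exact absurd hxy.symm (shiftFrom_ne _ _)
  · rw [hy, insertAt_self, insertAt_of_ne hx] at hxy
    exact absurd hxy (shiftFrom_ne _ _)
  · rw [insertAt_of_ne hx, insertAt_of_ne hy] at hxy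
    exact congrArg Subtype.val (hg₀ ((strictMono_shiftFrom k).injective hxy))

/-- The leaf `ℓ` goes right above its neighbour `v` if `ℓ` is a sink, right below it otherwise. -/
theorem IsUpwardStackLayout.insertAt_leaf [DecidableEq V] {Adj : V → V → Prop} {ℓ v : V}
    [Decidable (Adj v ℓ)] (hv : v ≠ ℓ) (hleaf : ∀ w, Adj ℓ w ∨ Adj w ℓ → w = v)
    (hasymm : Adj v ℓ → ¬ Adj ℓ v) {g₀ : {w // w ≠ ℓ} → ℕ}
    (hg₀ : IsUpwardStackLayout (fun x y : {w // w ≠ ℓ} => Adj x y) g₀) :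
    IsUpwardStackLayout Adj
      (insertAt ℓ (if Adj v ℓ then g₀ ⟨v, hv⟩ + 1 else g₀ ⟨v, hv⟩) g₀) := by
  set k := if Adj v ℓ then g₀ ⟨v, hv⟩ + 1 else g₀ ⟨v, hv⟩
  refine .of_restrict (ℓ := ℓ) (insertAt_injective hg₀.injective) ?_ ?_
  · rintro a b hab (rfl | rfl)
    · obtain rfl := hleaf b (.inl hab)
      have hk : k = g₀ ⟨b, hv⟩ := if_neg fun h => hasymm h hab
      rw [insertAt_self, insertAt_of_ne hv, hk, shiftFrom, if_neg (lt_irrefl _)]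
    · obtain rfl := hleaf a (.inr hab)
      have hk : k = g₀ ⟨a, hv⟩ + 1 := if_pos hab
      rw [insertAt_self, insertAt_of_ne hv, hk, shiftFrom, if_pos (Nat.lt_succ_self _)]
  · have hrest : (fun x : {w // w ≠ ℓ} => insertAt ℓ k g₀ x) = shiftFrom k ∘ g₀ :=
      funext fun x => insertAt_of_ne x.2 k g₀
    rw [hrest, (strictMono_shiftFrom k).isUpwardStackLayout_comp_iff]
    exact hg₀

theorem IsDirTree.restrict_compl_of_degree_eq_one {Adj : V → V → Prop} (hT : IsDirTree Adj)
    {ℓ : V} [Fintype ((SimpleGraph.fromRel Adj).neighborSet ℓ)]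
    (hℓ : (SimpleGraph.fromRel Adj).degree ℓ = 1) :
    IsDirTree (fun x y : {w // w ≠ ℓ} => Adj x y) := by
  have hinduce : SimpleGraph.fromRel (fun x y : {w // w ≠ ℓ} => Adj x y) =
      (SimpleGraph.fromRel Adj).induce {ℓ}ᶜ := by
    ext x y
    change _ ↔ (SimpleGraph.fromRel Adj).Adj x y
    simp [Subtype.ext_iff]
  refine ⟨fun u v h => hT.1 _ _ h, fun v => hT.2.1 _, ?_⟩
  rw [hinduce]
  exact ⟨hT.2.2.connected.induce_compl_singleton_of_degree_eq_one hℓ, hT.2.2.isAcyclic.induce _⟩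

theorem IsDirTree.exists_leaf_ne [Finite V] [Nontrivial V] {Adj : V → V → Prop}
    (hT : IsDirTree Adj) (r : V) : ∃ ℓ v, ℓ ≠ r ∧ v ≠ ℓ ∧ (Adj ℓ v ∨ Adj v ℓ) ∧
      (∀ w, Adj ℓ w ∨ Adj w ℓ → w = v) ∧ IsDirTree (fun x y : {w // w ≠ ℓ} => Adj x y) := by
  classical
  have := Fintype.ofFinite V
  obtain ⟨ℓ, hℓr, hℓ⟩ : ∃ ℓ, ℓ ≠ r ∧ (SimpleGraph.fromRel Adj).degree ℓ = 1 := by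
    obtain ⟨l₁, l₂, hne, h₁, h₂⟩ := hT.2.2.exists_ne_and_degree_eq_one
    by_cases hl₁ : l₁ = r
    · exact ⟨l₂, fun h => hne (hl₁.trans h.symm), h₂⟩
    · exact ⟨l₁, hl₁, h₁⟩
  obtain ⟨v, ⟨hℓv, hadj⟩, huniq⟩ := SimpleGraph.degree_eq_one_iff_existsUnique_adj.1 hℓ
  refine ⟨ℓ, v, hℓr, Ne.symm hℓv, hadj, fun w hw => huniq w ⟨?_, hw⟩,
    hT.restrict_compl_of_degree_eq_one hℓ⟩
  rintro rfl
  exact hT.2.1 ℓ (hw.elim id id)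

theorem IsDirTree.exists_upwardStackLayout [Finite V] {Adj : V → V → Prop} (hT : IsDirTree Adj)
    {r : V} (hr : ∀ u, ¬ Adj u r) :
    ∃ g : V → ℕ, IsUpwardStackLayout Adj g ∧ (∀ v, g v < Nat.card V) ∧ g r = 0 := by
  induction V using Finite.induction_subsingleton_or_nontrivial with
  | hbase V =>
    have hnoarc : ∀ u v, ¬ Adj u v := fun u v h => hT.2.1 u (Subsingleton.elim u v ▸ h)
    have : Nonempty V := ⟨r⟩
    refine ⟨fun _ => 0, ⟨Function.injective_of_subsingleton _, fun u v h => (hnoarc u v h).elim,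
      fun a b _ _ h => (hnoarc a b h).elim⟩, fun _ => Nat.card_pos, rfl⟩
  | hstep V ih =>
    classical
    obtain ⟨ℓ, v, hℓr, hv, hadj, hleaf, hT'⟩ := hT.exists_leaf_ne r
    have hcard : Nat.card {w // w ≠ ℓ} < Nat.card V := Finite.card_subtype_lt fun h => h rfl
    obtain ⟨g₀, hg₀, hbound, hroot⟩ := ih {w // w ≠ ℓ} hcard hT' (r := ⟨r, hℓr.symm⟩) fun u => hr u
    set k := if Adj v ℓ then g₀ ⟨v, hv⟩ + 1 else g₀ ⟨v, hv⟩ with hk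
    have hk_pos : 0 < k := by
      by_cases hvℓ : Adj v ℓ
      · simp [hk, hvℓ]
      · have hvr : (⟨v, hv⟩ : {w // w ≠ ℓ}) ≠ ⟨r, hℓr.symm⟩ := by
          rintro ⟨⟩
          exact hr ℓ (hadj.resolve_right hvℓ)
        have := hg₀.injective.ne hvr
        simp only [hk, if_neg hvℓ]
        omega
    refine ⟨insertAt ℓ k g₀, hg₀.insertAt_leaf hv hleaf fun h h' => hT.1 _ _ h' h, fun w => ?_, ?_⟩
    · have hk_le : k ≤ Nat.card {w // w ≠ ℓ} := by
        have := hbound ⟨v, hv⟩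
        split_ifs at hk <;> omega
      by_cases hw : w = ℓ
      · rw [hw, insertAt_self]; omega
      · have := hbound ⟨w, hw⟩
        rw [insertAt_of_ne hw, shiftFrom]
        split_ifs <;> omega
    · rw [insertAt_of_ne hℓr.symm, hroot, shiftFrom, if_pos hk_pos]

end StackLayout

theorem det2_swap (u v : ℝ × ℝ) : det2 u v = -det2 v u := by
  simp only [det2]; ring

theorem det2_sub_sub_rotate (x y z : ℝ × ℝ) : det2 (x - z) (y - z) = det2 (y - x) (z - x) := by
  simp only [det2, Prod.fst_sub, Prod.snd_sub]; ring

theorem exists_mem_segment_snd_eq {A B P : ℝ × ℝ} (hAB : A.2 < B.2) (hAP : A.2 ≤ P.2)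
    (hPB : P.2 ≤ B.2) :
    ∃ M ∈ segment ℝ A B, M.2 = P.2 ∧ det2 (B - A) (P - A) = (B.2 - A.2) * (M.1 - P.1) := by
  have hpos : 0 < B.2 - A.2 := sub_pos.2 hAB
  set c := (P.2 - A.2) / (B.2 - A.2)
  have hc : c ∈ Set.Icc (0 : ℝ) 1 :=
    ⟨div_nonneg (by linarith) hpos.le, (div_le_one hpos).2 (by linarith)⟩
  refine ⟨A + c • (B - A), segment_eq_image' ℝ A B ▸ ⟨c, hc, rfl⟩, ?_, ?_⟩
  · simp only [Prod.snd_add, Prod.smul_snd, Prod.snd_sub, smul_eq_mul, c]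
    field_simp
    ring
  · simp only [det2, Prod.fst_add, Prod.smul_fst, Prod.fst_sub, Prod.snd_sub, smul_eq_mul, c]
    field_simp
    ring

theorem mem_segment_of_snd_eq {M Q P : ℝ × ℝ} (hM : M.2 = P.2) (hQ : Q.2 = P.2)
    (h : (M.1 - P.1) * (Q.1 - P.1) ≤ 0) : P ∈ segment ℝ M Q := by
  rw [← Prod.mk.eta (p := M), ← Prod.mk.eta (p := Q), ← Prod.mk.eta (p := P), hM, hQ,
    ← Prod.image_mk_segment_left, segment_eq_uIcc]
  refine ⟨P.1, Set.mem_uIcc.2 ?_, rfl⟩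
  rcases lt_trichotomy M.1 P.1 with h₁ | h₁ | h₁ <;>
    rcases lt_trichotomy Q.1 P.1 with h₂ | h₂ | h₂ <;>
    first
    | exact .inl ⟨by linarith, by linarith⟩
    | exact .inr ⟨by linarith, by linarith⟩
    | nlinarith

theorem pos_mul_det2_of_notMem_convexHull {A B C D P : ℝ × ℝ} {σ : ℝ} (hAB : A.2 < B.2)
    (hCD : C.2 < D.2) (hAP : A.2 ≤ P.2) (hPB : P.2 ≤ B.2) (hCP : C.2 ≤ P.2) (hPD : P.2 ≤ D.2)
    (hside : 0 < σ * det2 (D - C) (P - C)) (hP : P ∉ convexHull ℝ {A, B, C, D}) :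
    0 < σ * det2 (B - A) (P - A) := by
  by_contra h
  obtain ⟨M, hM, hM₂, hdetM⟩ := exists_mem_segment_snd_eq hAB hAP hPB
  obtain ⟨Q, hQ, hQ₂, hdetQ⟩ := exists_mem_segment_snd_eq hCD hCP hPD
  rw [hdetM] at h
  rw [hdetQ] at hside
  have hMQ : (M.1 - P.1) * (Q.1 - P.1) ≤ 0 := by
    have hM₁ : σ * (M.1 - P.1) ≤ 0 := by nlinarith [sub_pos.2 hAB]
    have hQ₁ : 0 < σ * (Q.1 - P.1) := by nlinarith [sub_pos.2 hCD]
    have hσ : σ ≠ 0 := by rintro rfl; simp at hQ₁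
    nlinarith [mul_nonpos_of_nonpos_of_nonneg hM₁ hQ₁.le, sq_pos_of_ne_zero hσ]
  have hconv := convex_convexHull ℝ ({A, B, C, D} : Set (ℝ × ℝ))
  have hsub := subset_convexHull ℝ ({A, B, C, D} : Set (ℝ × ℝ))
  exact hP (hconv.segment_subset (hconv.segment_subset (hsub (by simp)) (hsub (by simp)) hM)
    (hconv.segment_subset (hsub (by simp)) (hsub (by simp)) hQ)
    (mem_segment_of_snd_eq hM₂ hQ₂ hMQ))

theorem eq_of_mem_segment_of_mem_segment {q u v x : ℝ × ℝ} (hdet : det2 (u - q) (v - q) ≠ 0)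
    (hu : x ∈ segment ℝ q u) (hv : x ∈ segment ℝ q v) : x = q := by
  rw [segment_eq_image'] at hu hv
  obtain ⟨s, -, rfl⟩ := hu
  obtain ⟨t, -, hts⟩ := hv
  dsimp only at hts ⊢
  have ht : t * det2 (u - q) (v - q) = 0 := by
    have := congrArg (det2 (u - q)) (add_left_cancel hts)
    simp only [det2, Prod.smul_fst, Prod.smul_snd, smul_eq_mul] at this ⊢
    linear_combination this
  rw [← hts, (mul_eq_zero.1 ht).resolve_right hdet, zero_smul, add_zero]

theorem det2_combo_sub (u : ℝ × ℝ) {A C D : ℝ × ℝ} {s t : ℝ} (hst : s + t = 1) :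
    det2 u (s • C + t • D - A) = s * det2 u (C - A) + t * det2 u (D - A) := by
  simp only [det2, Prod.fst_add, Prod.snd_add, Prod.smul_fst, Prod.smul_snd, Prod.fst_sub,
    Prod.snd_sub, smul_eq_mul]
  linear_combination (u.1 * A.2 - u.2 * A.1) * hst

theorem disjoint_segment_of_pos_mul_det2 {A B C D : ℝ × ℝ} {σ : ℝ}
    (hC : 0 < σ * det2 (B - A) (C - A)) (hD : 0 < σ * det2 (B - A) (D - A)) :
    Disjoint (segment ℝ A B) (segment ℝ C D) := by
  rw [Set.disjoint_left]
  rintro x ⟨a, b, -, -, hab, rfl⟩ ⟨s, t, hs, ht, hst, hx⟩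
  have h₀ : det2 (B - A) (a • A + b • B - A) = 0 := by
    rw [det2_combo_sub _ hab]
    simp only [det2, Prod.fst_sub, Prod.snd_sub]
    ring
  rw [← hx, det2_combo_sub _ hst] at h₀
  have h₁ : s * (σ * det2 (B - A) (C - A)) + t * (σ * det2 (B - A) (D - A)) = 0 := by
    linear_combination σ * h₀
  rcases hs.eq_or_lt with rfl | hs
  · nlinarith
  · nlinarith [mul_pos hs hC, mul_nonneg ht hD.le]

def IsConvexChain {ι : Type*} [LT ι] (σ : ℝ) (p : ι → ℝ × ℝ) : Prop :=
  ∀ ⦃i j k⦄, i < j → j < k → 0 < σ * det2 (p k - p i) (p j - p i)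

namespace IsConvexChain

variable {ι : Type*} [LinearOrder ι] {σ : ℝ} {p : ι → ℝ × ℝ}

theorem mul_det2_neg (hp : IsConvexChain σ p) {i j m : ι} (hij : i < j) (hm : m < i ∨ j < m) :
    σ * det2 (p j - p i) (p m - p i) < 0 := by
  rcases hm with hmi | hjm
  · have h := hp hmi hij
    rw [det2_sub_sub_rotate, det2_sub_sub_rotate, det2_swap] at h
    linarith
  · have h := hp hij hjm
    rw [det2_swap] at h
    linarith

theorem det2_ne_zero_of_lt (hp : IsConvexChain σ p) {i j m : ι} (hij : i < j) (hmi : m ≠ i)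
    (hmj : m ≠ j) : det2 (p j - p i) (p m - p i) ≠ 0 := by
  intro h
  rcases lt_or_gt_of_ne hmi with hm | hm
  · simpa [h] using hp.mul_det2_neg hij (.inl hm)
  rcases lt_or_gt_of_ne hmj with hm' | hm'
  · simpa [h] using hp hm hm'
  · simpa [h] using hp.mul_det2_neg hij (.inr hm')

theorem det2_ne_zero (hp : IsConvexChain σ p) {i j m : ι} (hij : i ≠ j) (him : i ≠ m)
    (hjm : j ≠ m) : det2 (p j - p i) (p m - p i) ≠ 0 := by
  rcases lt_or_gt_of_ne hij with hij | hji
  · exact hp.det2_ne_zero_of_lt hij him.symm hjm.symm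
  rcases lt_or_gt_of_ne him with him | hmi
  · rw [det2_swap, neg_ne_zero]
    exact hp.det2_ne_zero_of_lt him hij.symm hjm
  rw [det2_sub_sub_rotate]
  rcases lt_or_gt_of_ne hjm with hjm | hmj
  · exact hp.det2_ne_zero_of_lt hjm hij him
  · rw [det2_swap, neg_ne_zero]
    exact hp.det2_ne_zero_of_lt hji hjm.symm him.symm

theorem mem_of_mem_segment_of_mem_segment (hp : IsConvexChain σ p) {i j k l : ι}
    (hij : i < j) (hkl : k < l) (hne : (i, j) ≠ (k, l))
    (h₁ : ¬ Interleave i j k l) (h₂ : ¬ Interleave k l i j) {x : ℝ × ℝ}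
    (hx₁ : x ∈ segment ℝ (p i) (p j)) (hx₂ : x ∈ segment ℝ (p k) (p l)) :
    x ∈ ({p i, p j} : Set (ℝ × ℝ)) ∧ x ∈ ({p k, p l} : Set (ℝ × ℝ)) := by
  have shared : ∀ {q u v}, q ≠ u → q ≠ v → u ≠ v → x ∈ segment ℝ (p q) (p u) →
      x ∈ segment ℝ (p q) (p v) → x = p q := fun hqu hqv huv hu hv =>
    eq_of_mem_segment_of_mem_segment (hp.det2_ne_zero hqu hqv huv) hu hv
  by_cases hik : i = k
  · subst hik
    have hjl : j ≠ l := fun h => hne (by rw [h])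
    simp [shared hij.ne hkl.ne hjl hx₁ hx₂]
  by_cases hjl : j = l
  · subst hjl
    rw [segment_symm] at hx₁ hx₂
    simp [shared hij.ne' hkl.ne' hik hx₁ hx₂]
  by_cases hil : i = l
  · subst hil
    rw [segment_symm] at hx₂
    simp [shared hij.ne hkl.ne' (hkl.trans hij).ne' hx₁ hx₂]
  by_cases hjk : j = k
  · subst hjk
    rw [segment_symm] at hx₁
    simp [shared hij.ne' hkl.ne (hij.trans hkl).ne hx₁ hx₂]
  exfalso
  unfold Interleave at h₁ h₂
  by_cases hin : i < k ∧ k < j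
  · have hl : i < l ∧ l < j := by grind
    exact Set.disjoint_left.1 (disjoint_segment_of_pos_mul_det2 (hp hin.1 hin.2) (hp hl.1 hl.2))
      hx₁ hx₂
  · have hk : k < i ∨ j < k := by grind
    have hl : l < i ∨ j < l := by grind
    have hneg : ∀ {m}, m < i ∨ j < m → 0 < -σ * det2 (p j - p i) (p m - p i) := fun hm => by
      linarith [hp.mul_det2_neg hij hm]
    exact Set.disjoint_left.1 (disjoint_segment_of_pos_mul_det2 (hneg hk) (hneg hl)) hx₁ hx₂

theorem upse {V : Type*} (hp : IsConvexChain σ p) (hmono : StrictMono fun i => (p i).2)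
    {S : Finset (ℝ × ℝ)} (hpS : ∀ i, p i ∈ S) {Adj : V → V → Prop} {g : V → ι}
    (hg : IsUpwardStackLayout Adj g) :
    UPSE Adj S (p ∘ g) := by
  refine ⟨(Function.Injective.of_comp (f := Prod.snd) hmono.injective).comp hg.injective,
    fun v => hpS _, fun u v huv => hmono (hg.lt_of_adj huv), ?_⟩
  intro a b c d hab hcd hne x hx₁ hx₂
  refine hp.mem_of_mem_segment_of_mem_segment (hg.lt_of_adj hab) (hg.lt_of_adj hcd) ?_
    (hg.not_interleave hab hcd) (hg.not_interleave hcd hab) hx₁ hx₂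
  intro h
  exact hne (Prod.ext (hg.injective (congrArg Prod.fst h)) (hg.injective (congrArg Prod.snd h)))

end IsConvexChain

/-- Ordered by height, the points of a one-sided convex set form a convex chain: a point `p j`
on the wrong side of a chord `p i p k` would lie in the convex hull of `p i`, `p k` and the
lowest and highest points of `S`. -/
theorem OneSided.exists_isConvexChain {S : Finset (ℝ × ℝ)} (hS : OneSided S) {ι : Type*}
    [Preorder ι] {p : ι → ℝ × ℝ} (hmono : StrictMono fun i => (p i).2) (hpS : ∀ i, p i ∈ S) :
    ∃ σ, IsConvexChain σ p := by
  obtain ⟨⟨-, hconv⟩, b, t, hb, ht, hside⟩ := hS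
  obtain ⟨σ, hσ⟩ : ∃ σ : ℝ, ∀ q ∈ S, q ≠ b → q ≠ t → 0 < σ * det2 (t - b) (q - b) := by
    rcases hside with h | h
    · exact ⟨1, fun q hq hqb hqt => by simpa using h q hq hqb hqt⟩
    · exact ⟨-1, fun q hq hqb hqt => by simpa using h q hq hqb hqt⟩
  refine ⟨σ, fun i j k hij hjk => ?_⟩
  have hi := hmono hij
  have hk := hmono hjk
  have hbi := hb.2 _ (hpS i)
  have hkt := ht.2 _ (hpS k)
  have hne : ∀ q, q.2 ≠ (p j).2 → q ≠ p j := fun q h h' => h (h' ▸ rfl)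
  refine pos_mul_det2_of_notMem_convexHull (hi.trans hk) (by linarith) hi.le hk.le (by linarith)
    (by linarith) (hσ _ (hpS j) (hne b (by linarith)).symm (hne t (by linarith)).symm)
    fun hmem => hconv _ (hpS j) (convexHull_mono ?_ hmem)
  simp only [Set.insert_subset_iff, Set.singleton_subset_iff, coe_erase, Set.mem_sdiff,
    Set.mem_singleton_iff, mem_coe]
  exact ⟨⟨hpS i, hne _ hi.ne⟩, ⟨hpS k, hne _ hk.ne'⟩, ⟨hb.1, hne _ (by linarith)⟩,
    ⟨ht.1, hne _ (by linarith)⟩⟩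

theorem GenPos.injOn_snd {S : Finset (ℝ × ℝ)} (hS : GenPos S) :
    Set.InjOn Prod.snd (S : Set (ℝ × ℝ)) :=
  fun q hq q' hq' h => by_contra fun hne => hS.1 q hq q' hq' hne h

theorem Finset.exists_strictMono_snd_enum (S : Finset (ℝ × ℝ))
    (hS : Set.InjOn Prod.snd (S : Set (ℝ × ℝ))) :
    ∃ p : Fin S.card → ℝ × ℝ, StrictMono (fun i => (p i).2) ∧ Set.range p = S := by
  classical
  set e := (S.image Prod.snd).orderEmbOfFin (S.card_image_of_injOn hS)
  have he : ∀ i, ∃ q ∈ S, q.2 = e i := fun i => mem_image.1 (orderEmbOfFin_mem _ _ i)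
  choose p hpS hp using he
  refine ⟨p, fun i j hij => by simpa only [hp] using e.strictMono hij, ?_⟩
  ext q
  refine ⟨fun ⟨i, hi⟩ => hi ▸ hpS i, fun hq => ?_⟩
  obtain ⟨i, hi⟩ : q.2 ∈ Set.range e := by
    rw [range_orderEmbOfFin]
    exact mem_image_of_mem _ hq
  exact ⟨i, hS (hpS i) hq (by rw [hp, hi])⟩

theorem IsLowest.apply_zero_eq {S : Finset (ℝ × ℝ)} {b : ℝ × ℝ} (hb : IsLowest S b) {n : ℕ}
    {p : Fin n → ℝ × ℝ} (hmono : StrictMono fun i => (p i).2) (hp : Set.range p = S)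
    (hn : 0 < n) : p ⟨0, hn⟩ = b := by
  obtain ⟨i, rfl⟩ : b ∈ Set.range p := hp ▸ hb.1
  have hi : i ≤ ⟨0, hn⟩ := hmono.le_iff_le.1 (hb.2 _ (mem_coe.1 (hp ▸ Set.mem_range_self _)))
  rw [show i = ⟨0, hn⟩ from Fin.ext (Nat.le_zero.1 hi)]

theorem switch_tree_UPSE_one_sided_source_general {V : Type} [Fintype V] (Adj : V → V → Prop)
    (hT : IsDirTree Adj)
    (r : V) (hr : ∀ u, ¬ Adj u r)
    (S : Finset (ℝ × ℝ)) (hS : OneSided S) (hcard : S.card = Fintype.card V)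
    (b : ℝ × ℝ) (hb : IsLowest S b) :
    ∃ f : V → ℝ × ℝ, UPSE Adj S f ∧ f r = b := by
  obtain ⟨p, hmono, hrange⟩ := S.exists_strictMono_snd_enum hS.1.1.injOn_snd
  have hpS : ∀ i, p i ∈ S := fun i => mem_coe.1 (hrange ▸ Set.mem_range_self i)
  obtain ⟨σ, hchain⟩ := hS.exists_isConvexChain hmono hpS
  obtain ⟨g, hg, hbound, hgr⟩ := hT.exists_upwardStackLayout hr
  rw [Nat.card_eq_fintype_card, ← hcard] at hbound
  let g' : V → Fin S.card := fun v => ⟨g v, hbound v⟩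
  refine ⟨p ∘ g', hchain.upse hmono hpS (Fin.val_strictMono.isUpwardStackLayout_comp_iff.1 hg), ?_⟩
  exact (congrArg p (Fin.ext hgr : g' r = ⟨0, hgr ▸ hbound r⟩)).trans
    (hb.apply_zero_eq hmono hrange _)

theorem switch_tree_UPSE_one_sided_source {V : Type} [Fintype V] (Adj : V → V → Prop)
    (hT : IsDirTree Adj) (hsw : IsSwitch Adj)
    (r : V) (hr : ∀ u, ¬ Adj u r)
    (S : Finset (ℝ × ℝ)) (hS : OneSided S) (hcard : S.card = Fintype.card V)
    (b : ℝ × ℝ) (hb : IsLowest S b) :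
    ∃ f : V → ℝ × ℝ, UPSE Adj S f ∧ f r = b :=
  switch_tree_UPSE_one_sided_source_general Adj hT r hr S hS hcard b hb
end
end

section
/- Let S be a convex point set partitioned as in the paper's construction: apart from the extreme points b(S) and t(S), it is the disjoint union of one-sided (left-heavy) convex blocks C_1, ..., C_m satisfying: (a) C_i ∪ {b(S), t(S)} is a left-heavy convex point set for each i, (b) all points of C_{i+1} are higher than all points of C_i, and (c) for each i, the blocks C_1, ..., C_i lie to the left of the line through b(S) and the top point t(C_i) while C_{i+1}, ..., C_m lie to the right of it. Then for any i < j and any point x ∈ C_j, the set C_i ∪ {b(S), x} is a left-heavy convex point set in which b(S) and x are adjacent on its convex hull. -/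
open Finset

noncomputable section

/-- Left-heavy convex point set: convex position with all points to the left of, or on,
the line through the lowest point and the highest point. -/
def LeftHeavy (A : Finset (ℝ × ℝ)) : Prop :=
  ConvexPos A ∧ ∃ b t, IsLowest A b ∧ IsHighest A t ∧
    ∀ p ∈ A, 0 ≤ det2 (t - b) (p - b)

/-- `p` and `q` are adjacent on the convex hull of `A`: some line through both has all
other points of `A` strictly on one side. -/
def HullAdj (A : Finset (ℝ × ℝ)) (p q : ℝ × ℝ) : Prop :=
  ∃ φ : (ℝ × ℝ) →ₗ[ℝ] ℝ, φ p = φ q ∧ ∀ r ∈ A, r ≠ p → r ≠ q → φ r < φ p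

/-!
Let `x ∈ Cⱼ` with `i < j`. Every point of `Cᵢ` lies weakly left of the line through `b(S)` and
`t(Cᵢ)`, while `x` lies strictly right of it. As all these points are above `b(S)`, turning that
line about `b(S)` until it meets `x` sweeps past no point of `Cᵢ`, so all of `Cᵢ` lies strictly
left of the line `b(S) x`. That line therefore supports the hull edge `b(S) x`, and since `x` is
higher than all of `Cᵢ`, it is the line through the lowest and highest points of the new set.
-/

lemma det2_self (v : ℝ × ℝ) : det2 v v = 0 := by
  unfold det2; ring

lemma det2_pos_of_det2_neg_of_nonneg {u v w : ℝ × ℝ} (hu : 0 < u.2) (hv : 0 < v.2)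
    (hw : 0 < w.2) (huv : det2 u v < 0) (huw : 0 ≤ det2 u w) : 0 < det2 v w := by
  -- the Grassmann–Plücker relation for three vectors of the plane
  have hid : det2 v w * u.2 = det2 u w * v.2 - det2 u v * w.2 := by unfold det2; ring
  have hprod : 0 < det2 v w * u.2 := by
    rw [hid]; nlinarith [mul_nonneg huw hv.le, mul_pos (neg_pos.2 huv) hw]
  exact pos_of_mul_pos_left hprod hu.le

lemma ConvexPos.subset {A S : Finset (ℝ × ℝ)} (hS : ConvexPos S) (h : A ⊆ S) :
    ConvexPos A := by
  obtain ⟨⟨hy, hcol⟩, hhull⟩ := hS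
  refine ⟨⟨fun p hp q hq => hy p (h hp) q (h hq),
    fun p hp q hq r hr => hcol p (h hp) q (h hq) r (h hr)⟩, fun p hp hmem => ?_⟩
  exact hhull p (h hp) (convexHull_mono (by exact_mod_cast erase_subset_erase p h) hmem)

lemma IsLowest.snd_lt {S : Finset (ℝ × ℝ)} {b p : ℝ × ℝ} (hS : GenPos S) (hb : IsLowest S b)
    (hp : p ∈ S) (hne : p ≠ b) : b.2 < p.2 :=
  (hb.2 p hp).lt_of_ne (hS.1 p hp b hb.1 hne).symm

section Wedge

variable {T : Finset (ℝ × ℝ)} {b x : ℝ × ℝ}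

lemma leftHeavy_insert_insert (hconv : ConvexPos (insert b (insert x T)))
    (hbx : b.2 ≤ x.2) (hlow : ∀ p ∈ T, b.2 ≤ p.2) (hhigh : ∀ p ∈ T, p.2 ≤ x.2)
    (hleft : ∀ p ∈ T, 0 ≤ det2 (x - b) (p - b)) :
    LeftHeavy (insert b (insert x T)) := by
  refine ⟨hconv, b, x, ⟨mem_insert_self _ _, ?_⟩,
    ⟨mem_insert_of_mem (mem_insert_self _ _), ?_⟩, ?_⟩
  · simp only [mem_insert, forall_eq_or_imp, le_refl, true_and]
    exact ⟨hbx, hlow⟩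
  · simp only [mem_insert, forall_eq_or_imp, le_refl, true_and]
    exact ⟨hbx, hhigh⟩
  · simp only [mem_insert, forall_eq_or_imp, sub_self, det2_self]
    exact ⟨by simp [det2], le_rfl, hleft⟩

lemma hullAdj_insert_insert (hleft : ∀ p ∈ T, 0 < det2 (x - b) (p - b)) :
    HullAdj (insert b (insert x T)) b x := by
  let φ : (ℝ × ℝ) →ₗ[ℝ] ℝ := (x - b).2 • LinearMap.fst ℝ ℝ ℝ - (x - b).1 • LinearMap.snd ℝ ℝ ℝ
  have hφ : ∀ r, φ r = det2 r (x - b) := fun r => by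
    simp only [φ, det2, LinearMap.sub_apply, LinearMap.smul_apply, LinearMap.fst_apply,
      LinearMap.snd_apply, smul_eq_mul]; ring
  have hφ_sub : ∀ r, φ r - φ b = -det2 (x - b) (r - b) := fun r => by
    simp only [hφ, det2, Prod.fst_sub, Prod.snd_sub]; ring
  refine ⟨φ, by linarith [hφ_sub x, det2_self (x - b)], fun r hr hrb hrx => ?_⟩
  rcases mem_insert.1 hr with rfl | hr
  · exact absurd rfl hrb
  rcases mem_insert.1 hr with rfl | hr
  · exact absurd rfl hrx
  linarith [hφ_sub r, hleft r hr]

end Wedge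

theorem block_with_bottom_and_later_point_general (m : ℕ) (C : Fin m → Finset (ℝ × ℝ))
    (S : Finset (ℝ × ℝ)) (bS : ℝ × ℝ)
    (hS : ConvexPos S) (hb : IsLowest S bS)
    (hsub : ∀ i, C i ⊆ S)
    (hnb : ∀ i, bS ∉ C i)
    (tC : Fin m → ℝ × ℝ) (htC : ∀ i, IsHighest (C i) (tC i))
    -- (b) the points of `C_{i+1}` are higher than the points of `Cᵢ`:
    (hB : ∀ i j, i < j → ∀ p ∈ C i, ∀ q ∈ C j, p.2 < q.2)
    -- (c) `C₁, …, Cᵢ` lie to the left and `C_{i+1}, …, C_m` to the right of the line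
    -- through `b(S)` and `t(Cᵢ)`:
    (hC : ∀ i : Fin m,
      (∀ k, k ≤ i → ∀ p ∈ C k, p ≠ tC i → 0 < det2 (tC i - bS) (p - bS)) ∧
      (∀ k, i < k → ∀ p ∈ C k, det2 (tC i - bS) (p - bS) < 0)) :
    ∀ i j : Fin m, i < j → ∀ x ∈ C j,
      LeftHeavy (insert bS (insert x (C i))) ∧
      HullAdj (insert bS (insert x (C i))) bS x := by
  intro i j hij x hx
  have habove : ∀ k, ∀ p ∈ C k, 0 < (p - bS).2 := fun k p hp =>
    sub_pos.2 (hb.snd_lt hS.1 (hsub k hp) (ne_of_mem_of_not_mem hp (hnb k)))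
  have hleft : ∀ p ∈ C i, 0 < det2 (x - bS) (p - bS) := by
    intro p hp
    refine det2_pos_of_det2_neg_of_nonneg (habove i _ (htC i).1) (habove j x hx) (habove i p hp)
      ((hC i).2 j hij x hx) ?_
    rcases eq_or_ne p (tC i) with rfl | hpt
    · exact (det2_self _).ge
    · exact ((hC i).1 i le_rfl p hp hpt).le
  have hsubS : insert bS (insert x (C i)) ⊆ S :=
    insert_subset hb.1 (insert_subset (hsub j hx) (hsub i))
  exact ⟨leftHeavy_insert_insert (hS.subset hsubS) (hb.2 x (hsub j hx))
    (fun p hp => hb.2 p (hsub i hp)) (fun p hp => (hB i j hij p hp x hx).le)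
    (fun p hp => (hleft p hp).le), hullAdj_insert_insert hleft⟩

theorem block_with_bottom_and_later_point (m : ℕ) (C : Fin m → Finset (ℝ × ℝ))
    (S : Finset (ℝ × ℝ)) (bS tS : ℝ × ℝ)
    (hS : ConvexPos S) (hb : IsLowest S bS) (ht : IsHighest S tS)
    (hsub : ∀ i, C i ⊆ S)
    (hnb : ∀ i, bS ∉ C i) (hnt : ∀ i, tS ∉ C i)
    (hdisj : ∀ i j, i ≠ j → Disjoint (C i) (C j))
    (hcover : ∀ p ∈ S, p = bS ∨ p = tS ∨ ∃ i, p ∈ C i)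
    (tC : Fin m → ℝ × ℝ) (htC : ∀ i, IsHighest (C i) (tC i))
    -- (a) each `Cᵢ ∪ {b(S), t(S)}` is a left-heavy convex point set:
    (hA : ∀ i, LeftHeavy (C i ∪ {bS, tS}))
    -- (b) the points of `C_{i+1}` are higher than the points of `Cᵢ`:
    (hB : ∀ i j, i < j → ∀ p ∈ C i, ∀ q ∈ C j, p.2 < q.2)
    -- (c) `C₁, …, Cᵢ` lie to the left and `C_{i+1}, …, C_m` to the right of the line
    -- through `b(S)` and `t(Cᵢ)`:
    (hC : ∀ i : Fin m,
      (∀ k, k ≤ i → ∀ p ∈ C k, p ≠ tC i → 0 < det2 (tC i - bS) (p - bS)) ∧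
      (∀ k, i < k → ∀ p ∈ C k, det2 (tC i - bS) (p - bS) < 0)) :
    ∀ i j : Fin m, i < j → ∀ x ∈ C j,
      LeftHeavy (insert bS (insert x (C i))) ∧
      HullAdj (insert bS (insert x (C i))) bS x :=
  block_with_bottom_and_later_point_general m C S bS hS hb hsub hnb tC htC hB hC
end
end
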